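/- Let P₁ ≥ 0, P₂ ≥ 0 and a, b, c be real numbers. Then R_PDF ⊆ R_HK-PDF, where R_PDF is the set of pairs (R₁, R₂) ∈ ℝ² for which there exist reals α, β, γ, μ, ρ with α² + β² + γ² ≤ P₁, μ² ≤ P₂, ρ² ≤ 1 such that R₁ ≤ C(c²β²/(c²γ²+1)) + C(γ²/(b²μ²(1−ρ²)+1)), R₁ ≤ C(((α+bμρ)² + β² + γ²)/(b²μ²(1−ρ²)+1)), and R₂ ≤ C(μ²(1−ρ²)/(a²β² + a²γ² + 1)); and R_HK-PDF is the set of pairs (R₁, R₂) ∈ ℝ² for which there exist reals α, β, γ, δ, θ, μ, ρ with α² + β² + γ² + δ² ≤ P₁, θ² + μ² ≤ P₂, ρ² ≤ 1 such that, with the quantities I₂–I₁₀ and J₁₁–J₁₄ defined in the context, all seven inequalities hold: R₁ ≤ min(I₂+I₅, I₆); R₂ ≤ J₁₂; R₁+R₂ ≤ min(I₂+I₇, I₈) + J₁₃; R₁+R₂ ≤ min(I₂+I₃, I₄) + J₁₄; R₁+R₂ ≤ min(I₂+I₉, I₁₀) + J₁₁; 2R₁+R₂ ≤ min(I₂+I₃,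 I₄) + min(I₂+I₉, I₁₀) + J₁₃; R₁+2R₂ ≤ min(I₂+I₇, I₈) + J₁₁ + J₁₄. -/

import Mathlib

/-!
Switching off the Han-Kobayashi public codewords (`γ = θ = 0`, with the old `γ` becoming the
private power `δ`) turns every HK bound into a PDF bound, except that `I₄ = I₆ = I₈` is the PDF
term `C((x + y) / D)` split as `C(x / D) + C(y / (x + D))`. This is the chain rule for the
Gaussian capacity, `1 + (x + y) / D = (1 + x / D) (1 + y / (x + D))`; the sum-rate bounds are
then sums of the single-rate ones.
-/

noncomputable def gaussianCapacity (x : ℝ) : ℝ := 1 / 2 * Real.logb 2 (1 + x)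

theorem gaussianCapacity_zero : gaussianCapacity 0 = 0 := by
  simp [gaussianCapacity]

theorem gaussianCapacity_add_div {x y D : ℝ} (hx : 0 ≤ x) (hy : 0 ≤ y) (hD : 0 < D) :
    gaussianCapacity ((x + y) / D) =
      gaussianCapacity (x / D) + gaussianCapacity (y / (x + D)) := by
  have hxD : 0 < x + D := by linarith
  have h : 1 + (x + y) / D = (1 + x / D) * (1 + y / (x + D)) := by
    field_simp
    ring
  simp only [gaussianCapacity]
  rw [h, Real.logb_mul (by positivity) (by positivity)]
  ring

set_option maxHeartbeats 1000000
set_option maxRecDepth 4096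

theorem FD_HK_PDF_contains_PDF_general (P₁ P₂ a b c : ℝ) :
    let C : ℝ → ℝ := fun x => (1 / 2) * Real.logb 2 (1 + x)
    let R_PDF : Set (ℝ × ℝ) := {p | ∃ α β γ μ ρ : ℝ,
      α ^ 2 + β ^ 2 + γ ^ 2 ≤ P₁ ∧ μ ^ 2 ≤ P₂ ∧ ρ ^ 2 ≤ 1 ∧
      p.1 ≤ C (c ^ 2 * β ^ 2 / (c ^ 2 * γ ^ 2 + 1)) +
        C (γ ^ 2 / (b ^ 2 * μ ^ 2 * (1 - ρ ^ 2) + 1)) ∧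
      p.1 ≤ C (((α + b * μ * ρ) ^ 2 + β ^ 2 + γ ^ 2) /
        (b ^ 2 * μ ^ 2 * (1 - ρ ^ 2) + 1)) ∧
      p.2 ≤ C (μ ^ 2 * (1 - ρ ^ 2) / (a ^ 2 * β ^ 2 + a ^ 2 * γ ^ 2 + 1))}
    let R_HKPDF : Set (ℝ × ℝ) := {p | ∃ α β γ δ θ μ ρ : ℝ,
      α ^ 2 + β ^ 2 + γ ^ 2 + δ ^ 2 ≤ P₁ ∧ θ ^ 2 + μ ^ 2 ≤ P₂ ∧ ρ ^ 2 ≤ 1 ∧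
      p.1 ≤ min (C (c ^ 2 * β ^ 2 / (c ^ 2 * γ ^ 2 + c ^ 2 * δ ^ 2 + 1)) + C ((γ ^ 2 + δ ^ 2) / (b ^ 2 * (μ ^ 2 * (1 - ρ ^ 2)) + 1))) (C ((β ^ 2 + γ ^ 2 + δ ^ 2) / (b ^ 2 * (μ ^ 2 * (1 - ρ ^ 2)) + 1)) + C ((α + b * μ * ρ) ^ 2 / (β ^ 2 + γ ^ 2 + δ ^ 2 + b ^ 2 * θ ^ 2 + b ^ 2 * (μ ^ 2 * (1 - ρ ^ 2)) + 1))) ∧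
      p.2 ≤ (C ((μ ^ 2 * (1 - ρ ^ 2)) / (a ^ 2 * β ^ 2 + a ^ 2 * δ ^ 2 + 1)) + C (θ ^ 2 / ((a * α + μ * ρ) ^ 2 + a ^ 2 * β ^ 2 + a ^ 2 * δ ^ 2 + (μ ^ 2 * (1 - ρ ^ 2)) + 1))) ∧
      p.1 + p.2 ≤ min (C (c ^ 2 * β ^ 2 / (c ^ 2 * γ ^ 2 + c ^ 2 * δ ^ 2 + 1)) + C ((δ ^ 2 + b ^ 2 * θ ^ 2) / (b ^ 2 * (μ ^ 2 * (1 - ρ ^ 2)) + 1))) (C ((β ^ 2 + δ ^ 2 + b ^ 2 * θ ^ 2) / (b ^ 2 * (μ ^ 2 * (1 - ρ ^ 2)) + 1)) + C ((α + b * μ * ρ) ^ 2 / (β ^ 2 + γ ^ 2 + δ ^ 2 + b ^ 2 * θ ^ 2 + b ^ 2 * (μ ^ 2 * (1 - ρ ^ 2)) + 1))) + (C ((μ ^ 2 * (1 - ρ ^ 2)) / (a ^ 2 * β ^ 2 + a ^ 2 * δ ^ 2 + 1)) + C (a ^ 2 * γ ^ 2 / ((a * α + μ * ρ) ^ 2 +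 a ^ 2 * β ^ 2 + a ^ 2 * δ ^ 2 + (μ ^ 2 * (1 - ρ ^ 2)) + 1))) ∧
      p.1 + p.2 ≤ min (C (c ^ 2 * β ^ 2 / (c ^ 2 * γ ^ 2 + c ^ 2 * δ ^ 2 + 1)) + C (δ ^ 2 / (b ^ 2 * (μ ^ 2 * (1 - ρ ^ 2)) + 1))) (C ((β ^ 2 + δ ^ 2) / (b ^ 2 * (μ ^ 2 * (1 - ρ ^ 2)) + 1)) + C ((α + b * μ * ρ) ^ 2 / (β ^ 2 + γ ^ 2 + δ ^ 2 + b ^ 2 * θ ^ 2 + b ^ 2 * (μ ^ 2 * (1 - ρ ^ 2)) + 1))) + (C ((μ ^ 2 * (1 - ρ ^ 2)) / (a ^ 2 * β ^ 2 + a ^ 2 * δ ^ 2 + 1)) + C ((a ^ 2 * γ ^ 2 + θ ^ 2) / ((a * α + μ * ρ) ^ 2 + a ^ 2 * β ^ 2 + a ^ 2 * δ ^ 2 + (μ ^ 2 * (1 - ρ ^ 2)) + 1))) ∧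
      p.1 + p.2 ≤ min (C (c ^ 2 * β ^ 2 / (c ^ 2 * γ ^ 2 + c ^ 2 * δ ^ 2 + 1)) + C ((γ ^ 2 + δ ^ 2 + b ^ 2 * θ ^ 2) / (b ^ 2 * (μ ^ 2 * (1 - ρ ^ 2)) + 1))) (C (((α + b * μ * ρ) ^ 2 + β ^ 2 + γ ^ 2 + δ ^ 2 + b ^ 2 * θ ^ 2) / (b ^ 2 * (μ ^ 2 * (1 - ρ ^ 2)) + 1))) + C ((μ ^ 2 * (1 - ρ ^ 2)) / (a ^ 2 * β ^ 2 + a ^ 2 * δ ^ 2 + 1)) ∧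
      2 * p.1 + p.2 ≤ min (C (c ^ 2 * β ^ 2 / (c ^ 2 * γ ^ 2 + c ^ 2 * δ ^ 2 + 1)) + C (δ ^ 2 / (b ^ 2 * (μ ^ 2 * (1 - ρ ^ 2)) + 1))) (C ((β ^ 2 + δ ^ 2) / (b ^ 2 * (μ ^ 2 * (1 - ρ ^ 2)) + 1)) + C ((α + b * μ * ρ) ^ 2 / (β ^ 2 + γ ^ 2 + δ ^ 2 + b ^ 2 * θ ^ 2 + b ^ 2 * (μ ^ 2 * (1 - ρ ^ 2)) + 1))) + min (C (c ^ 2 * β ^ 2 / (c ^ 2 * γ ^ 2 + c ^ 2 * δ ^ 2 + 1)) + C ((γ ^ 2 + δ ^ 2 + b ^ 2 * θ ^ 2) / (b ^ 2 * (μ ^ 2 * (1 - ρ ^ 2)) + 1))) (C (((α + b * μ * ρ) ^ 2 + β ^ 2 + γ ^ 2 + δ ^ 2 + b ^ 2 * θ ^ 2) / (b ^ 2 * (μ ^ 2 * (1 - ρ ^ 2)) + 1))) + (C ((μ ^ 2 * (1 - ρ ^ 2)) / (a ^ 2 * β ^ 2 + a ^ 2 * δ ^ 2 + 1)) + C (a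 ^ 2 * γ ^ 2 / ((a * α + μ * ρ) ^ 2 + a ^ 2 * β ^ 2 + a ^ 2 * δ ^ 2 + (μ ^ 2 * (1 - ρ ^ 2)) + 1))) ∧
      p.1 + 2 * p.2 ≤ min (C (c ^ 2 * β ^ 2 / (c ^ 2 * γ ^ 2 + c ^ 2 * δ ^ 2 + 1)) + C ((δ ^ 2 + b ^ 2 * θ ^ 2) / (b ^ 2 * (μ ^ 2 * (1 - ρ ^ 2)) + 1))) (C ((β ^ 2 + δ ^ 2 + b ^ 2 * θ ^ 2) / (b ^ 2 * (μ ^ 2 * (1 - ρ ^ 2)) + 1)) + C ((α + b * μ * ρ) ^ 2 / (β ^ 2 + γ ^ 2 + δ ^ 2 + b ^ 2 * θ ^ 2 + b ^ 2 * (μ ^ 2 * (1 - ρ ^ 2)) + 1))) + C ((μ ^ 2 * (1 - ρ ^ 2)) / (a ^ 2 * β ^ 2 + a ^ 2 * δ ^ 2 + 1)) + (C ((μ ^ 2 * (1 - ρ ^ 2)) / (a ^ 2 * β ^ 2 + a ^ 2 * δ ^ 2 + 1)) + C ((a ^ 2 * γ ^ 2 + θ ^ 2) / ((a * α + μ * ρ)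 ^ 2 + a ^ 2 * β ^ 2 + a ^ 2 * δ ^ 2 + (μ ^ 2 * (1 - ρ ^ 2)) + 1)))}
    R_PDF ⊆ R_HKPDF := by
  intro C R_PDF R_HKPDF p ⟨α, β, γ, μ, ρ, hα, hμ, hρ, h₁, h₂, h₃⟩
  rw [mul_assoc (b ^ 2)] at h₁ h₂
  have hD : 0 < b ^ 2 * (μ ^ 2 * (1 - ρ ^ 2)) + 1 := by
    have : 0 ≤ 1 - ρ ^ 2 := by linarith
    positivity
  have h₂_split : p.1 ≤ C ((β ^ 2 + γ ^ 2) / (b ^ 2 * (μ ^ 2 * (1 - ρ ^ 2)) + 1)) +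
      C ((α + b * μ * ρ) ^ 2 / (β ^ 2 + γ ^ 2 + b ^ 2 * (μ ^ 2 * (1 - ρ ^ 2)) + 1)) := by
    calc p.1 ≤ C (((α + b * μ * ρ) ^ 2 + β ^ 2 + γ ^ 2) / (b ^ 2 * (μ ^ 2 * (1 - ρ ^ 2)) + 1)) := h₂
      _ = C ((β ^ 2 + γ ^ 2 + (α + b * μ * ρ) ^ 2) / (b ^ 2 * (μ ^ 2 * (1 - ρ ^ 2)) + 1)) := by
        ring_nf
      _ = _ := by
        rw [add_assoc (β ^ 2 + γ ^ 2)]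
        exact gaussianCapacity_add_div (by positivity) (sq_nonneg _) hD
  have hC0 : C 0 = 0 := gaussianCapacity_zero
  refine ⟨α, β, 0, γ, 0, μ, ρ, by linarith, by linarith, hρ, ?_, ?_, ?_, ?_, ?_, ?_, ?_⟩ <;>
    simp only [ne_eq, OfNat.ofNat_ne_zero, not_false_eq_true, zero_pow, mul_zero, add_zero,
      zero_add, zero_div, hC0] <;>
    linarith [le_min h₁ h₂_split, le_min h₁ h₂]

/-- Remark 2 (Gaussian form): the full-duplex Han-Kobayashi PDF-binning rate
region (Corollary 2) contains the PDF-binning rate region (Corollary 1). -/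
theorem FD_HK_PDF_contains_PDF (P₁ P₂ a b c : ℝ) (hP₁ : 0 ≤ P₁) (hP₂ : 0 ≤ P₂) :
    let C : ℝ → ℝ := fun x => (1 / 2) * Real.logb 2 (1 + x)
    let R_PDF : Set (ℝ × ℝ) := {p | ∃ α β γ μ ρ : ℝ,
      α ^ 2 + β ^ 2 + γ ^ 2 ≤ P₁ ∧ μ ^ 2 ≤ P₂ ∧ ρ ^ 2 ≤ 1 ∧
      p.1 ≤ C (c ^ 2 * β ^ 2 / (c ^ 2 * γ ^ 2 + 1)) +
        C (γ ^ 2 / (b ^ 2 * μ ^ 2 * (1 - ρ ^ 2) + 1)) ∧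
      p.1 ≤ C (((α + b * μ * ρ) ^ 2 + β ^ 2 + γ ^ 2) /
        (b ^ 2 * μ ^ 2 * (1 - ρ ^ 2) + 1)) ∧
      p.2 ≤ C (μ ^ 2 * (1 - ρ ^ 2) / (a ^ 2 * β ^ 2 + a ^ 2 * γ ^ 2 + 1))}
    let R_HKPDF : Set (ℝ × ℝ) := {p | ∃ α β γ δ θ μ ρ : ℝ,
      α ^ 2 + β ^ 2 + γ ^ 2 + δ ^ 2 ≤ P₁ ∧ θ ^ 2 + μ ^ 2 ≤ P₂ ∧ ρ ^ 2 ≤ 1 ∧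
      p.1 ≤ min (C (c ^ 2 * β ^ 2 / (c ^ 2 * γ ^ 2 + c ^ 2 * δ ^ 2 + 1)) + C ((γ ^ 2 + δ ^ 2) / (b ^ 2 * (μ ^ 2 * (1 - ρ ^ 2)) + 1))) (C ((β ^ 2 + γ ^ 2 + δ ^ 2) / (b ^ 2 * (μ ^ 2 * (1 - ρ ^ 2)) + 1)) + C ((α + b * μ * ρ) ^ 2 / (β ^ 2 + γ ^ 2 + δ ^ 2 + b ^ 2 * θ ^ 2 + b ^ 2 * (μ ^ 2 * (1 - ρ ^ 2)) + 1))) ∧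
      p.2 ≤ (C ((μ ^ 2 * (1 - ρ ^ 2)) / (a ^ 2 * β ^ 2 + a ^ 2 * δ ^ 2 + 1)) + C (θ ^ 2 / ((a * α + μ * ρ) ^ 2 + a ^ 2 * β ^ 2 + a ^ 2 * δ ^ 2 + (μ ^ 2 * (1 - ρ ^ 2)) + 1))) ∧
      p.1 + p.2 ≤ min (C (c ^ 2 * β ^ 2 / (c ^ 2 * γ ^ 2 + c ^ 2 * δ ^ 2 + 1)) + C ((δ ^ 2 + b ^ 2 * θ ^ 2) / (b ^ 2 * (μ ^ 2 * (1 - ρ ^ 2)) + 1))) (C ((β ^ 2 + δ ^ 2 + b ^ 2 * θ ^ 2) / (b ^ 2 * (μ ^ 2 * (1 - ρ ^ 2)) + 1)) + C ((α + b * μ * ρ) ^ 2 / (β ^ 2 + γ ^ 2 + δ ^ 2 + b ^ 2 * θ ^ 2 + b ^ 2 * (μ ^ 2 * (1 - ρ ^ 2)) + 1))) + (C ((μ ^ 2 * (1 - ρ ^ 2)) / (a ^ 2 * β ^ 2 + a ^ 2 * δ ^ 2 + 1)) + C (a ^ 2 * γ ^ 2 / ((a * α + μ * ρ) ^ 2 +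 a ^ 2 * β ^ 2 + a ^ 2 * δ ^ 2 + (μ ^ 2 * (1 - ρ ^ 2)) + 1))) ∧
      p.1 + p.2 ≤ min (C (c ^ 2 * β ^ 2 / (c ^ 2 * γ ^ 2 + c ^ 2 * δ ^ 2 + 1)) + C (δ ^ 2 / (b ^ 2 * (μ ^ 2 * (1 - ρ ^ 2)) + 1))) (C ((β ^ 2 + δ ^ 2) / (b ^ 2 * (μ ^ 2 * (1 - ρ ^ 2)) + 1)) + C ((α + b * μ * ρ) ^ 2 / (β ^ 2 + γ ^ 2 + δ ^ 2 + b ^ 2 * θ ^ 2 + b ^ 2 * (μ ^ 2 * (1 - ρ ^ 2)) + 1))) + (C ((μ ^ 2 * (1 - ρ ^ 2)) / (a ^ 2 * β ^ 2 + a ^ 2 * δ ^ 2 + 1)) + C ((a ^ 2 * γ ^ 2 + θ ^ 2) / ((a * α + μ * ρ) ^ 2 + a ^ 2 * β ^ 2 + a ^ 2 * δ ^ 2 + (μ ^ 2 * (1 - ρ ^ 2)) + 1))) ∧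
      p.1 + p.2 ≤ min (C (c ^ 2 * β ^ 2 / (c ^ 2 * γ ^ 2 + c ^ 2 * δ ^ 2 + 1)) + C ((γ ^ 2 + δ ^ 2 + b ^ 2 * θ ^ 2) / (b ^ 2 * (μ ^ 2 * (1 - ρ ^ 2)) + 1))) (C (((α + b * μ * ρ) ^ 2 + β ^ 2 + γ ^ 2 + δ ^ 2 + b ^ 2 * θ ^ 2) / (b ^ 2 * (μ ^ 2 * (1 - ρ ^ 2)) + 1))) + C ((μ ^ 2 * (1 - ρ ^ 2)) / (a ^ 2 * β ^ 2 + a ^ 2 * δ ^ 2 + 1)) ∧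
      2 * p.1 + p.2 ≤ min (C (c ^ 2 * β ^ 2 / (c ^ 2 * γ ^ 2 + c ^ 2 * δ ^ 2 + 1)) + C (δ ^ 2 / (b ^ 2 * (μ ^ 2 * (1 - ρ ^ 2)) + 1))) (C ((β ^ 2 + δ ^ 2) / (b ^ 2 * (μ ^ 2 * (1 - ρ ^ 2)) + 1)) + C ((α + b * μ * ρ) ^ 2 / (β ^ 2 + γ ^ 2 + δ ^ 2 + b ^ 2 * θ ^ 2 + b ^ 2 * (μ ^ 2 * (1 - ρ ^ 2)) + 1))) + min (C (c ^ 2 * β ^ 2 / (c ^ 2 * γ ^ 2 + c ^ 2 * δ ^ 2 + 1)) + C ((γ ^ 2 + δ ^ 2 + b ^ 2 * θ ^ 2) / (b ^ 2 * (μ ^ 2 * (1 - ρ ^ 2)) + 1))) (C (((α + b * μ * ρ) ^ 2 + β ^ 2 + γ ^ 2 + δ ^ 2 + b ^ 2 * θ ^ 2) / (b ^ 2 * (μ ^ 2 * (1 - ρ ^ 2)) + 1))) + (C ((μ ^ 2 * (1 - ρ ^ 2)) / (a ^ 2 * β ^ 2 + a ^ 2 * δ ^ 2 + 1)) + C (a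 ^ 2 * γ ^ 2 / ((a * α + μ * ρ) ^ 2 + a ^ 2 * β ^ 2 + a ^ 2 * δ ^ 2 + (μ ^ 2 * (1 - ρ ^ 2)) + 1))) ∧
      p.1 + 2 * p.2 ≤ min (C (c ^ 2 * β ^ 2 / (c ^ 2 * γ ^ 2 + c ^ 2 * δ ^ 2 + 1)) + C ((δ ^ 2 + b ^ 2 * θ ^ 2) / (b ^ 2 * (μ ^ 2 * (1 - ρ ^ 2)) + 1))) (C ((β ^ 2 + δ ^ 2 + b ^ 2 * θ ^ 2) / (b ^ 2 * (μ ^ 2 * (1 - ρ ^ 2)) + 1)) + C ((α + b * μ * ρ) ^ 2 / (β ^ 2 + γ ^ 2 + δ ^ 2 + b ^ 2 * θ ^ 2 + b ^ 2 * (μ ^ 2 * (1 - ρ ^ 2)) + 1))) + C ((μ ^ 2 * (1 - ρ ^ 2)) / (a ^ 2 * β ^ 2 + a ^ 2 * δ ^ 2 + 1)) + (C ((μ ^ 2 * (1 - ρ ^ 2)) / (a ^ 2 * β ^ 2 + a ^ 2 * δ ^ 2 + 1)) + C ((a ^ 2 * γ ^ 2 + θ ^ 2) / ((a * α + μ * ρ)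 ^ 2 + a ^ 2 * β ^ 2 + a ^ 2 * δ ^ 2 + (μ ^ 2 * (1 - ρ ^ 2)) + 1)))}
    R_PDF ⊆ R_HKPDF :=
  FD_HK_PDF_contains_PDF_general P₁ P₂ a b c
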